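/- arXiv:1906.10913 — 2 statements merged into one kernel-verified Lean document; each statement's English description precedes it below -/
import Mathlib

section
/- Let p₁ be a polynomial with p₁ ≠ 0 on 𝔻², and let p̃₂ be a polynomial with |p̃₂(ζ)| ≤ |p₁(ζ)| for all ζ ∈ 𝕋², such that p̃₂/p₁ is not a unimodular constant. Then for every λ ∈ 𝕋, the polynomial q_λ = λp₁ − p̃₂ has no zeros in the open bidisk 𝔻². -/
open MvPolynomial Polynomial Metric


lemma mv_diff (p : MvPolynomial (Fin 2) ℂ) :
    Differentiable ℂ (fun z : Fin 2 → ℂ => MvPolynomial.eval z p) := by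
  induction p using MvPolynomial.induction_on with
  | C a => simpa using differentiable_const a
  | add p q hp hq => simp only [map_add]; exact hp.add hq
  | mul_X p i hp =>
    simp only [map_mul, MvPolynomial.eval_X]; exact hp.mul (ContinuousLinearMap.proj (R := ℂ) (φ := fun _ : Fin 2 => ℂ) i).differentiable

noncomputable def slice1 (p : MvPolynomial (Fin 2) ℂ) (a : ℂ) : Polynomial ℂ :=
  MvPolynomial.aeval ![Polynomial.C a, Polynomial.X] p

noncomputable def slice2 (p : MvPolynomial (Fin 2) ℂ) (b : ℂ) : Polynomial ℂ :=
  MvPolynomial.aeval ![Polynomial.X, Polynomial.C b] p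

lemma slice1_eval (p : MvPolynomial (Fin 2) ℂ) (a w : ℂ) :
    (slice1 p a).eval w = MvPolynomial.eval ![a, w] p := by
  unfold slice1
  induction p using MvPolynomial.induction_on with
  | C c => simp
  | add p q hp hq => simp [hp, hq]
  | mul_X p i hp =>
    fin_cases i <;> simp [hp]

lemma slice2_eval (p : MvPolynomial (Fin 2) ℂ) (b w : ℂ) :
    (slice2 p b).eval w = MvPolynomial.eval ![w, b] p := by
  unfold slice2
  induction p using MvPolynomial.induction_on with
  | C c => simp
  | add p q hp hq => simp [hp, hq]
  | mul_X p i hp =>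
    fin_cases i <;> simp [hp]

lemma fn_eq_pair (z : Fin 2 → ℂ) : z = ![z 0, z 1] := by
  funext i; fin_cases i <;> rfl


-- circle points approaching ζ from within the circle, distinct from ζ
lemma circle_approach (ζ : ℂ) (hζ : ‖ζ‖ = 1) :
    ∃ u : ℕ → ℂ, (∀ n, ‖u n‖ = 1 ∧ u n ≠ ζ) ∧
      Filter.Tendsto u Filter.atTop (nhds ζ) := by
  refine ⟨fun n => ζ * Complex.exp ((1 / (n + 1) : ℝ) * Complex.I), fun n => ⟨?_, ?_⟩, ?_⟩
  · rw [norm_mul, hζ, Complex.norm_exp, one_mul]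
    simp
  · intro h
    have hne : ζ ≠ 0 := by intro h0; rw [h0] at hζ; simp at hζ
    have : Complex.exp ((1 / (n + 1) : ℝ) * Complex.I) = 1 := by
      have h' : ζ * Complex.exp ((1 / (n + 1) : ℝ) * Complex.I) = ζ * 1 := by rw [mul_one]; exact h
      exact mul_left_cancel₀ hne h'
    rw [Complex.exp_eq_one_iff] at this
    obtain ⟨k, hk⟩ := this
    have hI : ((1 / (n + 1) : ℝ) : ℂ) = (k : ℂ) * (2 * (Real.pi : ℂ)) := by
      apply mul_right_cancel₀ (b := Complex.I) Complex.I_ne_zero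
      rw [hk]; ring
    have : (1 / (n + 1) : ℝ) = k * (2 * Real.pi) := by
      exact_mod_cast hI
    have hpos : (0:ℝ) < 1 / (n + 1) := by positivity
    have hle : (1 / (n + 1) : ℝ) ≤ 1 := by
      rw [div_le_one (by positivity)]; linarith [Nat.cast_nonneg (α := ℝ) n]
    have hpi : (3:ℝ) ≤ Real.pi := by linarith [Real.pi_gt_three]
    rcases lt_trichotomy (k:ℝ) 0 with hk0 | hk0 | hk0
    · nlinarith
    · rw [this, hk0] at hpos; simp at hpos
    · have hk1 : (1:ℤ) ≤ k := by
        have : (0:ℤ) < k := by exact_mod_cast hk0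
        omega
      have : (1:ℝ) ≤ (k:ℝ) := by exact_mod_cast hk1
      nlinarith
  · have h0 : Filter.Tendsto (fun n : ℕ => (1 / (n + 1) : ℝ)) Filter.atTop (nhds 0) :=
      tendsto_one_div_add_atTop_nhds_zero_nat
    have := ((Complex.continuous_ofReal.tendsto 0).comp h0)
    have h2 : Filter.Tendsto (fun n : ℕ => ((1 / (n + 1) : ℝ) : ℂ) * Complex.I) Filter.atTop
        (nhds 0) := by
      simpa using this.mul_const Complex.I
    have h3 := (Complex.continuous_exp.tendsto 0).comp h2
    rw [Complex.exp_zero] at h3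
    simpa using h3.const_mul ζ

/-- One-variable lemma: if `P` is nonvanishing on the open unit disk and `|Q| ≤ |P|` on the
unit circle, then `|Q| ≤ |P|` on the closed unit disk. -/
lemma one_var_max (n : ℕ) : ∀ (P Q : Polynomial ℂ), P.natDegree = n →
    (∀ z : ℂ, ‖z‖ < 1 → P.eval z ≠ 0) →
    (∀ z : ℂ, ‖z‖ = 1 → ‖Q.eval z‖ ≤ ‖P.eval z‖) →
    ∀ z : ℂ, ‖z‖ ≤ 1 → ‖Q.eval z‖ ≤ ‖P.eval z‖ := by
  induction n using Nat.strong_induction_on with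
  | _ n IH =>
    intro P Q hdeg h1 h2 z hz
    by_cases hb : ∃ ζ : ℂ, ‖ζ‖ = 1 ∧ P.eval ζ = 0
    · obtain ⟨ζ, hζ1, hζ0⟩ := hb
      have hP0 : P ≠ 0 := fun h => h1 0 (by simp) (by simp [h])
      have hQζ : Q.eval ζ = 0 := by
        have := h2 ζ hζ1
        rw [hζ0] at this
        simpa using norm_eq_zero.mp (le_antisymm (by simpa using this) (by positivity))
      obtain ⟨P', hP'⟩ := (dvd_iff_isRoot.mpr hζ0 : (Polynomial.X - Polynomial.C ζ) ∣ P)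
      obtain ⟨Q', hQ'⟩ := (dvd_iff_isRoot.mpr hQζ : (Polynomial.X - Polynomial.C ζ) ∣ Q)
      have hP'0 : P' ≠ 0 := by rintro rfl; simp at hP'; exact hP0 hP'
      have hdeg' : P'.natDegree < n := by
        have : P.natDegree = 1 + P'.natDegree := by
          rw [hP', natDegree_mul (X_sub_C_ne_zero ζ) hP'0, natDegree_X_sub_C]
        omega
      have h1' : ∀ w : ℂ, ‖w‖ < 1 → P'.eval w ≠ 0 := by
        intro w hw hc
        exact h1 w hw (by rw [hP']; simp [hc])
      have key : ∀ w : ℂ, ‖w‖ = 1 → w ≠ ζ →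
          ‖Q'.eval w‖ ≤ ‖P'.eval w‖ := by
        intro w hw hwζ
        have := h2 w hw
        rw [hP', hQ', Polynomial.eval_mul, Polynomial.eval_mul, norm_mul, norm_mul] at this
        have hpos : 0 < ‖(Polynomial.X - Polynomial.C ζ).eval w‖ := by
          simp only [Polynomial.eval_sub, Polynomial.eval_X, Polynomial.eval_C]
          exact norm_pos_iff.mpr (sub_ne_zero.mpr hwζ)
        exact le_of_mul_le_mul_left this hpos
      have h2' : ∀ w : ℂ, ‖w‖ = 1 →
          ‖Q'.eval w‖ ≤ ‖P'.eval w‖ := by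
        intro w hw
        by_cases hwζ : w = ζ
        · subst hwζ
          obtain ⟨u, hu, hul⟩ := circle_approach w hw
          have cQ : Continuous fun x : ℂ => ‖Q'.eval x‖ :=
            continuous_norm.comp Q'.continuous
          have cP : Continuous fun x : ℂ => ‖P'.eval x‖ :=
            continuous_norm.comp P'.continuous
          have t1 := (cQ.tendsto w).comp hul
          have t2 := (cP.tendsto w).comp hul
          exact le_of_tendsto_of_tendsto' t1 t2 (fun k => key (u k) (hu k).1 (hu k).2)
        · exact key w hw hwζ
      have hle' := IH P'.natDegree hdeg' P' Q' rfl h1' h2' z hz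
      rw [hP', hQ', Polynomial.eval_mul, Polynomial.eval_mul, norm_mul, norm_mul]
      exact mul_le_mul_of_nonneg_left hle' (norm_nonneg _)
    · push_neg at hb
      have hPne : ∀ w : ℂ, ‖w‖ ≤ 1 → P.eval w ≠ 0 := by
        intro w hw
        rcases lt_or_eq_of_le hw with h | h
        · exact h1 w h
        · exact hb w h
      have hcball : ∀ w : ℂ, w ∈ closedBall (0:ℂ) 1 → P.eval w ≠ 0 := by
        intro w hw; exact hPne w (by simpa using mem_closedBall_zero_iff.mp hw)
      set f : ℂ → ℂ := fun w => Q.eval w / P.eval w with hf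
      have hdiff : DiffContOnCl ℂ f (ball (0:ℂ) 1) := by
        refine DiffContOnCl.mk ?_ ?_
        · exact (Q.differentiable.differentiableOn).div (P.differentiable.differentiableOn)
            (fun w hw => hcball w (ball_subset_closedBall hw))
        · rw [closure_ball (0:ℂ) one_ne_zero]
          exact (Q.continuous.continuousOn).div (P.continuous.continuousOn) hcball
      have hbound : ∀ w ∈ frontier (ball (0:ℂ) 1), ‖f w‖ ≤ 1 := by
        intro w hw
        rw [frontier_ball (0:ℂ) one_ne_zero, mem_sphere_zero_iff_norm] at hw
        have hw1 : ‖w‖ = 1 := by exact hw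
        rw [hf]
        simp only [norm_div]
        rw [div_le_one (norm_pos_iff.mpr (hb w hw1))]
        exact h2 w hw1
      have hzc : z ∈ closure (ball (0:ℂ) 1) := by
        rw [closure_ball (0:ℂ) one_ne_zero, mem_closedBall_zero_iff]
        exact hz
      have := Complex.norm_le_of_forall_mem_frontier_norm_le isBounded_ball hdiff hbound hzc
      rw [hf] at this
      simp only [norm_div] at this
      rwa [div_le_one (norm_pos_iff.mpr (hPne z hz))] at this



lemma joint_cont (p : MvPolynomial (Fin 2) ℂ) :
    Continuous fun q : ℂ × ℂ => MvPolynomial.eval ![q.1, q.2] p := by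
  apply (mv_diff p).continuous.comp
  apply continuous_pi
  intro i
  fin_cases i
  · exact continuous_fst
  · exact continuous_snd

lemma slice1_cases (p : MvPolynomial (Fin 2) ℂ)
    (hp : ∀ z : Fin 2 → ℂ, (∀ i, ‖z i‖ < 1) → MvPolynomial.eval z p ≠ 0)
    (a : ℂ) (ha : ‖a‖ = 1) :
    slice1 p a = 0 ∨ ∀ w : ℂ, ‖w‖ < 1 → (slice1 p a).eval w ≠ 0 := by
  by_contra hcon
  push_neg at hcon
  obtain ⟨hne, b₀, hb₀, hroot⟩ := hcon
  set P := slice1 p a with hP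
  -- finitely many roots
  have hfin : {x : ℂ | P.IsRoot x}.Finite := Polynomial.finite_setOf_isRoot hne
  set ε : ℝ := 1 - ‖b₀‖ with hε
  have hεpos : 0 < ε := by simp [hε]; linarith
  -- choose δ ∈ (0, ε) avoiding root distances
  have hinf : (Set.Ioo (0:ℝ) ε).Infinite := Set.Ioo_infinite hεpos
  have hD : ((Set.Ioo (0:ℝ) ε) \ ((fun z => dist z b₀) '' {x : ℂ | P.IsRoot x})).Nonempty :=
    (hinf.diff (hfin.image _)).nonempty
  obtain ⟨δ, hδIoo, hδD⟩ := hD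
  have hδpos : 0 < δ := hδIoo.1
  have hδε : δ < ε := hδIoo.2
  have hsub : closedBall b₀ δ ⊆ ball (0:ℂ) 1 := by
    intro z hz
    rw [mem_closedBall] at hz
    rw [mem_ball_zero_iff]
    calc ‖z‖ = ‖(z - b₀) + b₀‖ := by ring_nf
    _ ≤ ‖z - b₀‖ + ‖b₀‖ := norm_add_le _ _
    _ ≤ δ + ‖b₀‖ := by
        have : ‖z - b₀‖ = dist z b₀ := by rw [dist_eq_norm]
        rw [this]; linarith
    _ < 1 := by
        have : ‖b₀‖ = ‖b₀‖ := rfl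
        rw [this]; simp [hε] at hδε ⊢; linarith
  -- the approximating family
  set s : ℕ → ℝ := fun k => 1 - 1/(k+1) with hs
  have hs01 : ∀ k, 0 ≤ s k ∧ s k < 1 := by
    intro k
    constructor
    · simp only [hs, sub_nonneg]
      rw [div_le_one (by positivity)]
      linarith [Nat.cast_nonneg (α := ℝ) k]
    · simp only [hs]
      have : (0:ℝ) < 1/(k+1) := by positivity
      linarith
  set c : ℕ → ℂ := fun k => (s k : ℝ) * a with hc
  have hck : ∀ k, ‖c k‖ < 1 := by
    intro k
    simp only [hc, norm_mul, ha, mul_one, Complex.norm_real, Real.norm_eq_abs]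
    rw [abs_of_nonneg (hs01 k).1]
    exact (hs01 k).2
  set F : ℕ → Polynomial ℂ := fun k => slice1 p (c k) with hF
  have hFne : ∀ k, ∀ z ∈ closedBall b₀ δ, (F k).eval z ≠ 0 := by
    intro k z hz
    rw [hF, slice1_eval]
    apply hp
    intro i
    fin_cases i
    · exact hck k
    · simpa using mem_ball_zero_iff.mp (hsub hz)
  -- min point on sphere
  have hKcomp : IsCompact (sphere b₀ δ) := isCompact_sphere _ _
  have hKne : (sphere b₀ δ).Nonempty := NormedSpace.sphere_nonempty.mpr hδpos.le
  have hmin : ∀ k, ∃ zk ∈ sphere b₀ δ, ∀ z ∈ sphere b₀ δ, ‖(F k).eval zk‖ ≤ ‖(F k).eval z‖ := by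
    intro k
    obtain ⟨zk, hzk, hmin⟩ := hKcomp.exists_isMinOn hKne
      ((continuous_norm.comp (F k).continuous).continuousOn)
    exact ⟨zk, hzk, fun z hz => hmin hz⟩
  choose zk hzkmem hzkmin using hmin
  -- max principle: min on sphere ≤ value at center
  have hcenter : ∀ k, ‖(F k).eval (zk k)‖ ≤ ‖(F k).eval b₀‖ := by
    intro k
    have hpos : ∀ z ∈ closedBall b₀ δ, 0 < ‖(F k).eval z‖ :=
      fun z hz => norm_pos_iff.mpr (hFne k z hz)
    have hmp := Complex.norm_le_of_forall_mem_frontier_norm_le (f := fun z => ((F k).eval z)⁻¹)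
      (U := ball b₀ δ) isBounded_ball ?_ (C := ‖(F k).eval (zk k)‖⁻¹) ?_ (z := b₀) ?_
    · have h1 : 0 < ‖(F k).eval b₀‖ := hpos b₀ (mem_closedBall_self hδpos.le)
      have h2 : 0 < ‖(F k).eval (zk k)‖ := hpos (zk k) (sphere_subset_closedBall (hzkmem k))
      rw [norm_inv] at hmp
      exact (inv_le_inv₀ h1 h2).mp hmp
    · constructor
      · exact ((F k).differentiable.differentiableOn).inv
          (fun z hz => hFne k z (ball_subset_closedBall hz))
      · rw [closure_ball b₀ hδpos.ne']
        exact ((F k).continuous.continuousOn).inv₀ (hFne k)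
    · intro z hz
      rw [frontier_ball b₀ hδpos.ne'] at hz
      rw [norm_inv]
      exact inv_anti₀ (hpos (zk k) (sphere_subset_closedBall (hzkmem k))) (hzkmin k z hz)
    · rw [closure_ball b₀ hδpos.ne']
      exact mem_closedBall_self hδpos.le
  -- subsequence
  obtain ⟨zs, hzs, φ, hφ, hconv⟩ := hKcomp.tendsto_subseq hzkmem
  -- limits
  have hcconv : Filter.Tendsto (fun k => c (φ k)) Filter.atTop (nhds a) := by
    have h1 : Filter.Tendsto s Filter.atTop (nhds 1) := by
      have := tendsto_one_div_add_atTop_nhds_zero_nat (𝕜 := ℝ)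
      simpa [hs] using (tendsto_const_nhds (x := (1:ℝ))).sub this
    have h2 : Filter.Tendsto (fun k => ((s k : ℝ) : ℂ)) Filter.atTop (nhds 1) := by
      have := (Complex.continuous_ofReal.tendsto 1).comp h1
      exact this
    have h3 := h2.comp hφ.tendsto_atTop
    simpa [hc] using h3.mul_const a
  have hlim1 : Filter.Tendsto (fun k => ‖(F (φ k)).eval (zk (φ k))‖) Filter.atTop
      (nhds ‖P.eval zs‖) := by
    have hq : Filter.Tendsto (fun k => ((c (φ k)), zk (φ k))) Filter.atTop (nhds (a, zs)) :=
      hcconv.prodMk_nhds hconv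
    have h1 := ((joint_cont p).tendsto (a, zs)).comp hq
    have h2 := (continuous_norm.tendsto _).comp h1
    have heq : (fun k => ‖(F (φ k)).eval (zk (φ k))‖)
        = fun k => ‖MvPolynomial.eval ![c (φ k), zk (φ k)] p‖ := by
      funext k; simp only [hF]; rw [slice1_eval]
    rw [heq, hP, slice1_eval]
    simpa [Function.comp_def] using h2
  have hlim2 : Filter.Tendsto (fun k => ‖(F (φ k)).eval b₀‖) Filter.atTop (nhds 0) := by
    have hq : Filter.Tendsto (fun k => ((c (φ k)), b₀)) Filter.atTop (nhds (a, b₀)) :=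
      hcconv.prodMk_nhds tendsto_const_nhds
    have h1 := ((joint_cont p).tendsto (a, b₀)).comp hq
    have h2 := (continuous_norm.tendsto _).comp h1
    have hPb₀ : MvPolynomial.eval ![a, b₀] p = 0 := by rw [← slice1_eval]; exact hroot
    have heq : (fun k => ‖(F (φ k)).eval b₀‖)
        = fun k => ‖MvPolynomial.eval ![c (φ k), b₀] p‖ := by
      funext k; simp only [hF]; rw [slice1_eval]
    rw [heq]
    have h3 : ‖MvPolynomial.eval ![(a, b₀).1, (a, b₀).2] p‖ = 0 := by simpa using congrArg norm hPb₀
    simpa [Function.comp_def, hPb₀] using h2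
  have hfinal : ‖P.eval zs‖ ≤ 0 :=
    le_of_tendsto_of_tendsto' hlim1 hlim2 (fun k => hcenter (φ k))
  have : P.IsRoot zs := by
    rw [IsRoot.def, ← norm_eq_zero]
    exact le_antisymm hfinal (norm_nonneg _)
  exact hδD ⟨zs, this, (by rwa [mem_sphere] at hzs)⟩


lemma circle_infinite : {z : ℂ | ‖z‖ = 1}.Infinite := by
  apply Set.infinite_of_injective_forall_mem
    (f := fun n : ℕ => Complex.exp ((1/(n+1) : ℝ) * Complex.I))
  · intro n m hnm
    simp only at hnm
    have h := Complex.exp_eq_exp_iff_exists_int.mp hnm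
    obtain ⟨k, hk⟩ := h
    have hI : ((1/(n+1) : ℝ) : ℂ) = ((1/(m+1) : ℝ) : ℂ) + (k : ℂ) * (2 * (Real.pi:ℂ)) := by
      apply mul_right_cancel₀ (b := Complex.I) Complex.I_ne_zero
      rw [hk]; ring
    have hr : (1/(n+1) : ℝ) = (1/(m+1) : ℝ) + (k:ℝ) * (2 * Real.pi) := by exact_mod_cast hI
    have h1 : (0:ℝ) < 1/(n+1) := by positivity
    have h2 : (0:ℝ) < 1/(m+1) := by positivity
    have h3 : (1/(n+1) : ℝ) ≤ 1 := by
      rw [div_le_one (by positivity)]; linarith [Nat.cast_nonneg (α := ℝ) n]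
    have h4 : (1/(m+1) : ℝ) ≤ 1 := by
      rw [div_le_one (by positivity)]; linarith [Nat.cast_nonneg (α := ℝ) m]
    have hpi : (3:ℝ) ≤ Real.pi := by linarith [Real.pi_gt_three]
    have hk0 : k = 0 := by
      rcases lt_trichotomy (k:ℝ) 0 with h | h | h
      · have hk' : k < 0 := by exact_mod_cast h
        have : (k:ℝ) ≤ -1 := by exact_mod_cast (by omega : k ≤ -1)
        nlinarith
      · exact_mod_cast h
      · have hk' : 0 < k := by exact_mod_cast h
        have : (1:ℝ) ≤ (k:ℝ) := by exact_mod_cast (by omega : 1 ≤ k)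
        nlinarith
    rw [hk0] at hr
    norm_num at hr
    exact hr
  · intro n
    simp only [Set.mem_setOf_eq, Complex.norm_exp]
    simp


lemma bound_B1 (p₁ pt₂ : MvPolynomial (Fin 2) ℂ)
    (hp₁ : ∀ z : Fin 2 → ℂ, (∀ i, ‖z i‖ < 1) → MvPolynomial.eval z p₁ ≠ 0)
    (hle : ∀ ζ : Fin 2 → ℂ, (∀ i, ‖ζ i‖ = 1) →
      ‖MvPolynomial.eval ζ pt₂‖ ≤ ‖MvPolynomial.eval ζ p₁‖)
    (ζ₁ : ℂ) (hζ : ‖ζ₁‖ = 1) (b : ℂ) (hb : ‖b‖ < 1) :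
    ‖MvPolynomial.eval ![ζ₁, b] pt₂‖ ≤ ‖MvPolynomial.eval ![ζ₁, b] p₁‖ := by
  set P := slice1 p₁ ζ₁ with hP
  set Q := slice1 pt₂ ζ₁ with hQ
  have h2 : ∀ w : ℂ, ‖w‖ = 1 → ‖Q.eval w‖ ≤ ‖P.eval w‖ := by
    intro w hw
    rw [hP, hQ, slice1_eval, slice1_eval]
    apply hle
    intro i; fin_cases i <;> simpa
  rw [← slice1_eval, ← slice1_eval, ← hP, ← hQ]
  rcases slice1_cases p₁ hp₁ ζ₁ hζ with hzero | hnv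
  · have hQ0 : Q = 0 := by
      apply Q.eq_zero_of_infinite_isRoot
      apply circle_infinite.mono
      intro w hw
      have := h2 w hw
      rw [← hP] at hzero
      rw [hzero] at this
      simp only [Polynomial.eval_zero, norm_zero] at this
      simpa [IsRoot] using norm_eq_zero.mp (le_antisymm this (by positivity))
    rw [← hP] at hzero
    rw [hzero, hQ0]
  · exact one_var_max P.natDegree P Q rfl hnv h2 b hb.le

lemma bound_B2 (p₁ pt₂ : MvPolynomial (Fin 2) ℂ)
    (hp₁ : ∀ z : Fin 2 → ℂ, (∀ i, ‖z i‖ < 1) → MvPolynomial.eval z p₁ ≠ 0)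
    (hle : ∀ ζ : Fin 2 → ℂ, (∀ i, ‖ζ i‖ = 1) →
      ‖MvPolynomial.eval ζ pt₂‖ ≤ ‖MvPolynomial.eval ζ p₁‖)
    (a b : ℂ) (ha : ‖a‖ < 1) (hb : ‖b‖ < 1) :
    ‖MvPolynomial.eval ![a, b] pt₂‖ ≤ ‖MvPolynomial.eval ![a, b] p₁‖ := by
  set P := slice2 p₁ b with hP
  set Q := slice2 pt₂ b with hQ
  have h1 : ∀ w : ℂ, ‖w‖ < 1 → P.eval w ≠ 0 := by
    intro w hw
    rw [hP, slice2_eval]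
    apply hp₁
    intro i; fin_cases i <;> simpa
  have h2 : ∀ w : ℂ, ‖w‖ = 1 → ‖Q.eval w‖ ≤ ‖P.eval w‖ := by
    intro w hw
    rw [hP, hQ, slice2_eval, slice2_eval]
    exact bound_B1 p₁ pt₂ hp₁ hle w hw b hb
  rw [← slice2_eval, ← slice2_eval, ← hP, ← hQ]
  exact one_var_max P.natDegree P Q rfl h1 h2 a ha.le

/-- If `p₁` is nonvanishing on the open bidisk, `|p̃₂| ≤ |p₁|` on the torus, and `p̃₂/p₁` is
not a unimodular constant, then for every unimodular `λ` the polynomial `λp₁ − p̃₂` has no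
zeros in the open bidisk. -/
theorem q_lambda_nonvanishing (p₁ pt₂ : MvPolynomial (Fin 2) ℂ)
    (hp₁ : ∀ z : Fin 2 → ℂ, (∀ i, ‖z i‖ < 1) → MvPolynomial.eval z p₁ ≠ 0)
    (hle : ∀ ζ : Fin 2 → ℂ, (∀ i, ‖ζ i‖ = 1) →
      ‖MvPolynomial.eval ζ pt₂‖ ≤ ‖MvPolynomial.eval ζ p₁‖)
    (hnc : ¬ ∃ α : ℂ, ‖α‖ = 1 ∧
      ∀ z : Fin 2 → ℂ, (∀ i, ‖z i‖ < 1) →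
        MvPolynomial.eval z pt₂ = α * MvPolynomial.eval z p₁) :
    ∀ l : ℂ, ‖l‖ = 1 →
      ∀ z : Fin 2 → ℂ, (∀ i, ‖z i‖ < 1) →
        l * MvPolynomial.eval z p₁ - MvPolynomial.eval z pt₂ ≠ 0 := by
  intro l hl z hz h0
  set U : Set (Fin 2 → ℂ) := ball 0 1 with hU
  have hmem : ∀ x : Fin 2 → ℂ, x ∈ U ↔ ∀ i, ‖x i‖ < 1 := by
    intro x
    rw [hU, mem_ball_zero_iff, pi_norm_lt_iff one_pos]
  have hp₁U : ∀ x ∈ U, MvPolynomial.eval x p₁ ≠ 0 := fun x hx => hp₁ x ((hmem x).mp hx)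
  have hB : ∀ x ∈ U, ‖MvPolynomial.eval x pt₂‖ ≤
      ‖MvPolynomial.eval x p₁‖ := by
    intro x hx
    have h := bound_B2 p₁ pt₂ hp₁ hle (x 0) (x 1) (((hmem x).mp hx) 0) (((hmem x).mp hx) 1)
    rwa [← fn_eq_pair] at h
  set f : (Fin 2 → ℂ) → ℂ := fun x => MvPolynomial.eval x pt₂ / MvPolynomial.eval x p₁ with hf
  have hzU : z ∈ U := (hmem z).mpr hz
  have hpt : MvPolynomial.eval z pt₂ = l * MvPolynomial.eval z p₁ :=
    (sub_eq_zero.mp h0).symm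
  have hfz : f z = l := by
    rw [hf]
    simp only
    rw [hpt, mul_div_assoc, div_self (hp₁U z hzU), mul_one]
  have hmax : IsMaxOn (norm ∘ f) U z := by
    intro x hx
    simp only [Set.mem_setOf_eq, Function.comp_apply]
    rw [hfz, hf]
    simp only
    rw [norm_div, hl]
    rw [div_le_one (norm_pos_iff.mpr (hp₁U x hx))]
    exact hB x hx
  have hd1 : DifferentiableOn ℂ (fun x : Fin 2 → ℂ => MvPolynomial.eval x pt₂) U :=
    (mv_diff pt₂).differentiableOn
  have hd2 : DifferentiableOn ℂ (fun x : Fin 2 → ℂ => MvPolynomial.eval x p₁) U :=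
    (mv_diff p₁).differentiableOn
  have hdiff : DifferentiableOn ℂ f U := by
    intro x hx
    have heqf : f = fun x => MvPolynomial.eval x pt₂ * (MvPolynomial.eval x p₁)⁻¹ := by
      funext y; rw [hf]; simp [div_eq_mul_inv]
    rw [heqf]
    exact (hd1 x hx).mul ((hd2 x hx).inv (hp₁U x hx))
  have heq := Complex.eqOn_of_isPreconnected_of_isMaxOn_norm
    (convex_ball (0 : Fin 2 → ℂ) 1).isPreconnected isOpen_ball hdiff hzU hmax
  apply hnc
  refine ⟨l, hl, fun x hx => ?_⟩
  have hxU : x ∈ U := (hmem x).mpr hx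
  have := heq hxU
  simp only [Function.const_apply, hfz] at this
  rw [hf] at this
  simp only at this
  field_simp [hp₁U x hxU] at this
  rw [this, mul_comm]
end

section
/- Let b(z) = Π_{i=1}^{n} (z − α_i)/(1 − conj(α_i) z) be a finite Blaschke product with zeros α₁,...,α_n ∈ 𝔻, and set δ(b) = min_i (1 − |α_i|). Then for each real 𝔭 with 1 ≤ 𝔭 < ∞ there exist constants c, C > 0 depending only on n and 𝔭 such that c·δ(b)^{1−𝔭} ≤ ∫_𝕋 |b′(ζ)|^𝔭 |dζ| ≤ C·δ(b)^{1−𝔭}. -/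
/-!
On the unit circle `|b| = 1` and `ζ b'(ζ) / b(ζ) = ∑ᵢ Pᵢ(ζ)`, where
`Pᵢ(ζ) = (1 - |αᵢ|²) / |ζ - αᵢ|²` is the Poisson kernel of the zero `αᵢ`; hence `|b'| = ∑ᵢ Pᵢ`.
Each `Pᵢ` integrates to `2π` over the circle and is bounded by `2 / (1 - |αᵢ|) ≤ 2 / δ`, so
`∫ |b'|^p ≤ (2n/δ)^(p-1) ∫ |b'| = 2πn (2n/δ)^(p-1)`. Conversely, for a zero `α` with
`1 - |α| = δ`, its Poisson kernel is at least `1 / (4δ)` on the arc of length `δ` starting at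
the angle `arg α`, which gives `∫ |b'|^p ≥ δ (4δ)^(-p)`.
-/

open Real
open Metric MeasureTheory ComplexConjugate

theorem integral_rpow_le_rpow_sub_one_mul_integral {X : Type*} [MeasurableSpace X]
    {μ : Measure X} {f : X → ℝ} {M p : ℝ} (hp : 1 ≤ p) (hf : Integrable f μ)
    (hf0 : 0 ≤ᵐ[μ] f) (hfM : ∀ᵐ x ∂μ, f x ≤ M) :
    ∫ x, f x ^ p ∂μ ≤ M ^ (p - 1) * ∫ x, f x ∂μ := by
  rw [← integral_const_mul]
  refine integral_mono_of_nonneg (hf0.mono fun x hx => rpow_nonneg hx p) (hf.const_mul _) ?_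
  filter_upwards [hf0, hfM] with x hx0 hxM
  calc f x ^ p = f x ^ (p - 1) * f x := by
        rw [← rpow_add_one' hx0 (by linarith), sub_add_cancel]
    _ ≤ M ^ (p - 1) * f x := by gcongr

theorem poissonKernel_nonneg {c w z : ℂ} (h : ‖w - c‖ ≤ ‖z - c‖) : 0 ≤ poissonKernel c w z :=
  div_nonneg (sub_nonneg.2 (pow_le_pow_left₀ (norm_nonneg _) h 2)) (sq_nonneg _)

theorem continuous_poissonKernel_circleMap {c w : ℂ} {R : ℝ} (hw : w ∈ ball c R) :
    Continuous fun θ => poissonKernel c w (circleMap c R θ) := by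
  rw [poissonKernel_eq_re_herglotzRieszKernel]
  exact Complex.continuous_re.comp <| (continuousOn_herglotzRieszKernel_sphere hw).comp_continuous
    (continuous_circleMap c R) (circleMap_mem_sphere' c R)

theorem integral_poissonKernel_circleMap {c w : ℂ} {R : ℝ} (hw : w ∈ ball c R) :
    ∫ θ in 0..2 * π, poissonKernel c w (circleMap c R θ) = 2 * π := by
  have h := (diffContOnCl_const (c := (1 : ℂ))).circleAverage_poissonKernel_smul hw
  simp only [Real.circleAverage_def, Pi.smul_apply', Complex.real_smul, mul_one,
    intervalIntegral.integral_ofReal] at h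
  norm_cast at h
  exact ((inv_mul_eq_one₀ (by positivity)).1 h).symm

noncomputable def blaschkeFactor (a z : ℂ) : ℂ := (z - a) / (1 - conj a * z)

noncomputable def blaschkeProduct {ι : Type*} [Fintype ι] (α : ι → ℂ) (z : ℂ) : ℂ :=
  ∏ i, blaschkeFactor (α i) z

section UnitCircle

variable {a z : ℂ}

theorem poissonKernel_zero_le (hz : ‖z‖ = 1) (ha : ‖a‖ < 1) :
    poissonKernel 0 a z ≤ 2 / (1 - ‖a‖) := by
  have h := re_herglotzRieszKernel_le (c := 0) (R := 1) (by simpa using hz) (by simpa using ha)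
  rw [← herglotzRieszKernel_def, ← Function.comp_apply (f := Complex.re),
    ← poissonKernel_eq_re_herglotzRieszKernel, sub_zero] at h
  exact h.trans (div_le_div_of_nonneg_right (by linarith [norm_nonneg a]) (by linarith))

theorem inv_four_mul_le_poissonKernel_zero (hz : ‖z‖ = 1) (ha : ‖a‖ < 1)
    (hza : ‖z - a‖ ≤ 2 * (1 - ‖a‖)) : (4 * (1 - ‖a‖))⁻¹ ≤ poissonKernel 0 a z := by
  have hza0 : 0 < ‖z - a‖ := norm_pos_iff.2 (sub_ne_zero.2 fun h => ha.ne (h ▸ hz))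
  simp only [poissonKernel_def, sub_zero, hz, one_pow]
  rw [inv_eq_one_div, div_le_div_iff₀ (by linarith) (by positivity)]
  nlinarith [norm_nonneg a, pow_le_pow_left₀ hza0.le hza 2]

theorem norm_circleMap_zero_one_sub_le (ha : ‖a‖ ≤ 1) (θ : ℝ) :
    ‖circleMap 0 1 θ - a‖ ≤ |θ - a.arg| + (1 - ‖a‖) := by
  have hrot : ‖circleMap 0 1 a.arg - a‖ = 1 - ‖a‖ := by
    nth_rw 2 [← Complex.norm_mul_exp_arg_mul_I a]
    rw [circleMap_zero, ← sub_mul, norm_mul, Complex.norm_exp_ofReal_mul_I, mul_one]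
    norm_cast
    exact norm_of_nonneg (by linarith)
  calc ‖circleMap 0 1 θ - a‖
      ≤ ‖circleMap 0 1 θ - circleMap 0 1 a.arg‖ + ‖circleMap 0 1 a.arg - a‖ :=
        norm_sub_le_norm_sub_add_norm_sub _ _ _
    _ ≤ |θ - a.arg| + (1 - ‖a‖) := by
      rw [hrot, ← dist_eq_norm]
      gcongr
      simpa [Real.dist_eq] using (lipschitzWith_circleMap 0 1).dist_le_mul θ a.arg

theorem one_sub_conj_mul_eq_mul_conj_sub (hz : ‖z‖ = 1) : 1 - conj a * z = z * conj (z - a) := by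
  have hzz : z * conj z = 1 := by
    rw [Complex.mul_conj, Complex.normSq_eq_norm_sq, hz]; norm_num
  rw [map_sub, mul_sub, hzz]; ring

theorem norm_one_sub_conj_mul (hz : ‖z‖ = 1) : ‖1 - conj a * z‖ = ‖z - a‖ := by
  rw [one_sub_conj_mul_eq_mul_conj_sub hz, norm_mul, hz, one_mul, Complex.norm_conj]

theorem one_sub_conj_mul_ne_zero (hz : ‖z‖ = 1) (hza : z ≠ a) : 1 - conj a * z ≠ 0 := by
  rw [← norm_ne_zero_iff, norm_one_sub_conj_mul hz, norm_ne_zero_iff]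
  exact sub_ne_zero.2 hza

theorem norm_blaschkeFactor_eq_one (hz : ‖z‖ = 1) (hza : z ≠ a) : ‖blaschkeFactor a z‖ = 1 := by
  rw [blaschkeFactor, norm_div, norm_one_sub_conj_mul hz,
    div_self (norm_ne_zero_iff.2 (sub_ne_zero.2 hza))]

theorem hasDerivAt_blaschkeFactor (h : 1 - conj a * z ≠ 0) :
    HasDerivAt (blaschkeFactor a) ((1 - conj a * a) / (1 - conj a * z) ^ 2) z := by
  have hnum : HasDerivAt (fun z : ℂ => z - a) 1 z := (hasDerivAt_id z).sub_const a
  have hden : HasDerivAt (fun z : ℂ => 1 - conj a * z) (-conj a) z := by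
    simpa using ((hasDerivAt_id z).const_mul (conj a)).const_sub 1
  exact (hnum.fun_div hden h).congr_deriv (by ring)

theorem logDeriv_blaschkeFactor (hz : ‖z‖ = 1) (hza : z ≠ a) :
    logDeriv (blaschkeFactor a) z = z⁻¹ * poissonKernel 0 a z := by
  have hz0 : z ≠ 0 := norm_ne_zero_iff.1 (hz ▸ one_ne_zero)
  have hconj : conj (z - a) ≠ 0 := (map_ne_zero _).2 (sub_ne_zero.2 hza)
  rw [logDeriv_apply, (hasDerivAt_blaschkeFactor (one_sub_conj_mul_ne_zero hz hza)).deriv,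
    blaschkeFactor, poissonKernel_def]
  simp only [sub_zero, hz, one_pow]
  push_cast
  rw [← Complex.conj_mul' a, ← Complex.conj_mul' (z - a), one_sub_conj_mul_eq_mul_conj_sub hz]
  field_simp

end UnitCircle

section BlaschkeProduct

variable {ι : Type*} [Fintype ι] {α : ι → ℂ}

theorem norm_deriv_blaschkeProduct (hα : ∀ i, ‖α i‖ < 1) {z : ℂ} (hz : ‖z‖ = 1) :
    ‖deriv (blaschkeProduct α) z‖ = ∑ i, poissonKernel 0 (α i) z := by
  have hzα : ∀ i, z ≠ α i := fun i h => (hα i).ne (h ▸ hz)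
  have hb : ‖blaschkeProduct α z‖ = 1 := by
    simp [blaschkeProduct, norm_prod, norm_blaschkeFactor_eq_one hz (hzα _)]
  have hlog : logDeriv (blaschkeProduct α) z = z⁻¹ * ∑ i, (poissonKernel 0 (α i) z : ℂ) := by
    rw [Finset.mul_sum]
    refine (logDeriv_prod (fun i _ => ?_) (fun i _ => ?_)).trans
      (Finset.sum_congr rfl fun i _ => logDeriv_blaschkeFactor hz (hzα i))
    · exact norm_ne_zero_iff.1 (by rw [norm_blaschkeFactor_eq_one hz (hzα i)]; exact one_ne_zero)
    · exact (hasDerivAt_blaschkeFactor (one_sub_conj_mul_ne_zero hz (hzα i))).differentiableAt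
  have hderiv :
      deriv (blaschkeProduct α) z = blaschkeProduct α z * logDeriv (blaschkeProduct α) z := by
    rw [logDeriv_apply, mul_div_cancel₀ _ (norm_ne_zero_iff.1 (hb ▸ one_ne_zero))]
  rw [hderiv, hlog, norm_mul, norm_mul, hb, norm_inv, hz, inv_one, one_mul, one_mul]
  norm_cast
  exact Real.norm_of_nonneg (Finset.sum_nonneg fun i _ =>
    poissonKernel_nonneg (by simpa [hz] using (hα i).le))

theorem continuous_norm_deriv_blaschkeProduct_circleMap (hα : ∀ i, ‖α i‖ < 1) :
    Continuous fun θ => ‖deriv (blaschkeProduct α) (circleMap 0 1 θ)‖ := by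
  refine (continuous_finsetSum _ fun i _ => continuous_poissonKernel_circleMap ?_).congr
    fun θ => (norm_deriv_blaschkeProduct hα (by simp)).symm
  simpa using hα i

theorem le_integral_norm_deriv_blaschkeProduct_rpow (hα : ∀ i, ‖α i‖ < 1) (i : ι) {p : ℝ}
    (hp : 1 ≤ p) :
    4⁻¹ ^ p * (1 - ‖α i‖) ^ (1 - p) ≤
      ∫ θ in 0..2 * π, ‖deriv (blaschkeProduct α) (circleMap 0 1 θ)‖ ^ p := by
  set s := 1 - ‖α i‖
  set φ := (α i).arg
  set F := fun θ => ‖deriv (blaschkeProduct α) (circleMap 0 1 θ)‖ ^ p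
  have hs : 0 < s := sub_pos.2 (hα i)
  have hs1 : s ≤ 1 := sub_le_self _ (norm_nonneg _)
  have hF : Continuous F :=
    (continuous_norm_deriv_blaschkeProduct_circleMap hα).rpow_const fun _ => Or.inr (by linarith)
  have hF0 : ∀ θ, 0 ≤ F θ := fun θ => rpow_nonneg (norm_nonneg _) p
  have hper : ∫ θ in 0..2 * π, F θ = ∫ θ in φ..φ + 2 * π, F θ := by
    simpa using (((periodic_circleMap 0 1).comp fun ζ => ‖deriv (blaschkeProduct α) ζ‖ ^ p)
      |>.intervalIntegral_add_eq 0 φ)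
  have harc : ∀ θ ∈ Set.Icc φ (φ + s), (4 * s)⁻¹ ^ p ≤ F θ := by
    intro θ hθ
    have hθφ : |θ - φ| ≤ s := abs_le.2 ⟨by linarith [hθ.1], by linarith [hθ.2]⟩
    have hζ : ‖circleMap 0 1 θ‖ = 1 := by simp
    refine rpow_le_rpow (by positivity) ?_ (by linarith)
    rw [norm_deriv_blaschkeProduct hα hζ]
    refine (inv_four_mul_le_poissonKernel_zero hζ (hα i) ?_).trans
      (Finset.single_le_sum (fun j _ => poissonKernel_nonneg ?_) (Finset.mem_univ i))
    · linarith [norm_circleMap_zero_one_sub_le (hα i).le θ]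
    · simpa [hζ] using (hα j).le
  calc 4⁻¹ ^ p * s ^ (1 - p) = ∫ _θ in φ..φ + s, (4 * s)⁻¹ ^ p := by
        rw [intervalIntegral.integral_const, smul_eq_mul, add_sub_cancel_left, mul_inv,
          mul_rpow (by norm_num) (inv_nonneg.2 hs.le), inv_rpow hs.le, rpow_sub hs, rpow_one]
        ring
    _ ≤ ∫ θ in φ..φ + s, F θ :=
      intervalIntegral.integral_mono_on (by linarith) intervalIntegrable_const
        (hF.intervalIntegrable _ _) harc
    _ ≤ ∫ θ in φ..φ + 2 * π, F θ :=
      intervalIntegral.integral_mono_interval le_rfl (by linarith) (by linarith [two_le_pi])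
        (ae_of_all _ hF0) (hF.intervalIntegrable _ _)
    _ = ∫ θ in 0..2 * π, F θ := hper.symm

theorem integral_norm_deriv_blaschkeProduct_rpow_le (hα : ∀ i, ‖α i‖ < 1) {δ p : ℝ} (hδ : 0 < δ)
    (hδα : ∀ i, δ ≤ 1 - ‖α i‖) (hp : 1 ≤ p) :
    ∫ θ in 0..2 * π, ‖deriv (blaschkeProduct α) (circleMap 0 1 θ)‖ ^ p ≤
      2 * π * Fintype.card ι * (2 * Fintype.card ι) ^ (p - 1) * δ ^ (1 - p) := by
  set S := fun θ => ∑ i, poissonKernel 0 (α i) (circleMap 0 1 θ)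
  have hS : ∀ θ, ‖deriv (blaschkeProduct α) (circleMap 0 1 θ)‖ = S θ := fun θ =>
    norm_deriv_blaschkeProduct hα (by simp)
  have hcont : ∀ i, Continuous fun θ => poissonKernel 0 (α i) (circleMap 0 1 θ) := fun i =>
    continuous_poissonKernel_circleMap (by simpa using hα i)
  have hS0 : ∀ θ, 0 ≤ S θ := fun θ =>
    Finset.sum_nonneg fun i _ => poissonKernel_nonneg (by simpa using (hα i).le)
  have hSle : ∀ θ, S θ ≤ 2 * Fintype.card ι / δ := fun θ => calc
    S θ ≤ ∑ _i : ι, 2 / δ := Finset.sum_le_sum fun i _ =>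
        (poissonKernel_zero_le (by simp) (hα i)).trans
          (div_le_div_of_nonneg_left zero_le_two hδ (hδα i))
    _ = 2 * Fintype.card ι / δ := by rw [Finset.sum_const, Finset.card_univ, nsmul_eq_mul]; ring
  have hint : ∫ θ in 0..2 * π, S θ = Fintype.card ι * (2 * π) := by
    rw [intervalIntegral.integral_finsetSum fun i _ => (hcont i).intervalIntegrable _ _]
    simp [integral_poissonKernel_circleMap, hα]
  simp_rw [hS, intervalIntegral.integral_of_le two_pi_pos.le]
  calc ∫ θ in Set.Ioc 0 (2 * π), S θ ^ p
      ≤ (2 * Fintype.card ι / δ) ^ (p - 1) * ∫ θ in Set.Ioc 0 (2 * π), S θ :=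
        integral_rpow_le_rpow_sub_one_mul_integral hp
          (continuous_finsetSum _ fun i _ => hcont i).integrableOn_Ioc
          (ae_of_all _ hS0) (ae_of_all _ hSle)
    _ = 2 * π * Fintype.card ι * (2 * Fintype.card ι) ^ (p - 1) * δ ^ (1 - p) := by
      rw [← intervalIntegral.integral_of_le two_pi_pos.le, hint, div_rpow (by positivity) hδ.le,
        show 1 - p = -(p - 1) by ring, rpow_neg hδ.le]
      ring

end BlaschkeProduct

/-- For a finite Blaschke product `b` with zeros `α₁,…,αₙ ∈ 𝔻` and
`δ(b) = minᵢ (1 − |αᵢ|)`, one has `∫_𝕋 |b′|^𝔭 ≈ δ(b)^{1−𝔭}`, with constants depending only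
on `n` and `𝔭`. -/
theorem blaschke_derivative_integral_comparable (n : ℕ) (hn : 0 < n) (p : ℝ) (hp : 1 ≤ p) :
    ∃ c C : ℝ, 0 < c ∧ 0 < C ∧
      ∀ α : Fin n → ℂ, (∀ i, ‖α i‖ < 1) →
        c * (⨅ i, (1 - ‖α i‖)) ^ (1 - p) ≤
            (∫ θ in (0 : ℝ)..(2 * π),
              ‖
                (deriv (fun z : ℂ => ∏ i, (z - α i) / (1 - (starRingEnd ℂ) (α i) * z))
                  (Complex.exp (θ * Complex.I)))‖ ^ p) ∧
          (∫ θ in (0 : ℝ)..(2 * π),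
              ‖
                (deriv (fun z : ℂ => ∏ i, (z - α i) / (1 - (starRingEnd ℂ) (α i) * z))
                  (Complex.exp (θ * Complex.I)))‖ ^ p) ≤
            C * (⨅ i, (1 - ‖α i‖)) ^ (1 - p) := by
  have hn' : (0 : ℝ) < n := Nat.cast_pos.2 hn
  refine ⟨4⁻¹ ^ p, 2 * π * n * (2 * n) ^ (p - 1), by positivity, by positivity, fun α hα => ?_⟩
  have : Nonempty (Fin n) := ⟨⟨0, hn⟩⟩
  obtain ⟨i₀, hi₀⟩ := Finite.exists_min fun i => 1 - ‖α i‖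
  have hδ : ⨅ i, (1 - ‖α i‖) = 1 - ‖α i₀‖ :=
    le_antisymm (ciInf_le (Finite.bddBelow_range _) i₀) (le_ciInf hi₀)
  have hexp : ∀ θ : ℝ, Complex.exp (θ * Complex.I) = circleMap 0 1 θ := by simp [circleMap_zero]
  simp_rw [hexp, hδ]
  have hupper := integral_norm_deriv_blaschkeProduct_rpow_le hα (sub_pos.2 (hα i₀)) hi₀ hp
  rw [Fintype.card_fin] at hupper
  exact ⟨le_integral_norm_deriv_blaschkeProduct_rpow hα i₀ hp, hupper⟩
end
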